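/- arXiv:2511.07374 — 2 statements merged into one kernel-verified Lean document; each statement's English description precedes it below -/
import Mathlib

section
/- For every integer k ≥ 3 and every integer n ≥ k, there exists a connected bipartite simple graph with both bipartition classes of size n, containing no path on 2k-1 vertices as a subgraph, and having exactly (k-1)n - (k-2) edges. Consequently ex_{b,c}(n,n,P_{2k}) ≥ ex_{b,c}(n,n,P_{2k-1}) ≥ (k-1)n - (k-2). -/
open SimpleGraph

open Finset


/-- directed edge relation for the extremal graph -/
def bipR (k n : ℕ) (u v : Fin (2*n)) : Prop :=
  (u.val < k-2 ∧ u.val < n ∧ n ≤ v.val) ∨ (k-2 ≤ u.val ∧ u.val < n ∧ v.val = n)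

def myG (k n : ℕ) : SimpleGraph (Fin (2*n)) where
  Adj u v := bipR k n u v ∨ bipR k n v u
  symm := by constructor; intro u v h; tauto
  loopless := by constructor; intro u h; rcases h with (h|h) <;> rcases h with (⟨h1,h2,h4⟩|⟨h1,h2,h3⟩) <;> omega

lemma myG_adj {k n : ℕ} {u v : Fin (2*n)} :
    (myG k n).Adj u v ↔ bipR k n u v ∨ bipR k n v u := Iff.rfl

lemma bipR_sides {k n : ℕ} {u v : Fin (2*n)} (h : bipR k n u v) : u.val < n ∧ n ≤ v.val := by
  rcases h with (⟨h1,h2,h4⟩|⟨h1,h2,h3⟩) <;> omega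

lemma adj_sides {k n : ℕ} {u v : Fin (2*n)} (h : (myG k n).Adj u v) :
    (u.val < n ∧ n ≤ v.val) ∨ (v.val < n ∧ n ≤ u.val) := by
  rcases h with h|h
  · exact Or.inl (bipR_sides h)
  · exact Or.inr (bipR_sides h)

/-- a pendant vertex's only neighbour is `b0` (index `n`). -/
lemma adj_pendant {k n : ℕ} {u v : Fin (2*n)} (hu1 : k-2 ≤ u.val) (hu2 : u.val < n)
    (h : (myG k n).Adj u v) : v.val = n := by
  rcases h with (h|h) <;> rcases h with (⟨h1,h2,h4⟩|⟨h1,h2,h3⟩) <;> omega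

lemma card_filter_lt {m c : ℕ} (h : c ≤ m) :
    (Finset.univ.filter fun v : Fin m => v.val < c).card = c := by
  have : (Finset.univ.filter fun v : Fin m => v.val < c)
      = (Finset.range c).attachFin (fun a ha => lt_of_lt_of_le (Finset.mem_range.1 ha) h) := by
    ext i; simp [Finset.mem_attachFin]
  rw [this, Finset.card_attachFin, Finset.card_range]

lemma card_filter_ge {m c : ℕ} :
    (Finset.univ.filter fun v : Fin m => c ≤ v.val).card = m - c := by
  have : (Finset.univ.filter fun v : Fin m => c ≤ v.val)
      = (Finset.Ico c m).attachFin (fun a ha => (Finset.mem_Ico.1 ha).2) := by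
    ext i; simp [Finset.mem_attachFin, i.isLt]
  rw [this, Finset.card_attachFin, Nat.card_Ico]

lemma card_filter_ico {m c d : ℕ} (hd : d ≤ m) :
    (Finset.univ.filter fun v : Fin m => c ≤ v.val ∧ v.val < d).card = d - c := by
  have : (Finset.univ.filter fun v : Fin m => c ≤ v.val ∧ v.val < d)
      = (Finset.Ico c d).attachFin (fun a ha => lt_of_lt_of_le (Finset.mem_Ico.1 ha).2 hd) := by
    ext i; simp [Finset.mem_attachFin]
  rw [this, Finset.card_attachFin, Nat.card_Ico]

/-- pigeonhole: no injection of `Fin (k-1)` into the `k-2` hub vertices -/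
lemma pigeon {k n : ℕ} (hk : 3 ≤ k) (hn : k ≤ n) (g : Fin (k-1) → Fin (2*n))
    (hinj : Function.Injective g) (hS : ∀ j, (g j).val < k-2) : False := by
  have hcard := Finset.card_le_card_of_injOn (s := (Finset.univ : Finset (Fin (k-1)))) (t := Finset.univ.filter fun v : Fin (2*n) => v.val < k-2) g
      (fun j _ => Finset.mem_filter.2 ⟨Finset.mem_univ _, hS j⟩)
      (fun a _ b _ h => hinj h)
  rw [card_filter_lt (show k-2 ≤ 2*n by omega), Finset.card_univ, Fintype.card_fin] at hcard
  omega

/-- `G` contains a copy of `H` as a (not necessarily induced) subgraph. -/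
def Contains {V W : Type*} (G : SimpleGraph V) (H : SimpleGraph W) : Prop :=
  ∃ f : H →g G, Function.Injective f


lemma contains_path_mono {V : Type*} (G : SimpleGraph V) {a b : ℕ} (h : a ≤ b)
    (hc : Contains G (pathGraph b)) : Contains G (pathGraph a) := by
  obtain ⟨f, hf⟩ := hc
  refine ⟨⟨fun i => f (Fin.castLE h i), fun {u v} huv => f.map_adj ?_⟩,
    fun x y hxy => Fin.castLE_injective h (hf hxy)⟩
  rw [pathGraph_adj] at huv ⊢
  simpa using huv

lemma no_path {k n : ℕ} (hk : 3 ≤ k) (hn : k ≤ n) :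
    ¬ Contains (myG k n) (pathGraph (2*k-1)) := by
  rintro ⟨f, hf⟩
  have hNpos : 0 < 2*k-1 := by omega
  let g : ℕ → Fin (2*n) := fun m => f ⟨m % (2*k-1), Nat.mod_lt m hNpos⟩
  have hadj : ∀ m, m + 1 < (2*k-1) → (myG k n).Adj (g m) (g (m+1)) := by
    intro m h
    apply f.map_adj
    rw [pathGraph_adj]
    left
    show m % (2*k-1) + 1 = (m+1) % (2*k-1)
    have e1 : m % (2*k-1) = m := Nat.mod_eq_of_lt (by omega)
    have e2 : (m+1) % (2*k-1) = m+1 := Nat.mod_eq_of_lt h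
    omega
  have ginj : ∀ a b, a < (2*k-1) → b < (2*k-1) → g a = g b → a = b := by
    intro a b ha hb hab
    have hab' : f ⟨a % (2*k-1), Nat.mod_lt a hNpos⟩ = f ⟨b % (2*k-1), Nat.mod_lt b hNpos⟩ := hab
    have h2 : a % (2*k-1) = b % (2*k-1) := Fin.mk.inj_iff.1 (hf hab')
    have e1 : a % (2*k-1) = a := Nat.mod_eq_of_lt ha
    have e2 : b % (2*k-1) = b := Nat.mod_eq_of_lt hb
    omega
  have par : ∀ m, m < (2*k-1) → ((g m).val < n ↔ (Even m ↔ (g 0).val < n)) := by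
    intro m
    induction m with
    | zero => intro h; simp
    | succ m ih =>
      intro h
      have h1 : m < (2*k-1) := by omega
      have hflip := adj_sides (hadj m h)
      have hih := ih h1
      rw [Nat.even_add_one]
      constructor
      · intro h2
        have : ¬ (g m).val < n := by omega
        tauto
      · intro h2
        have : ¬ (g m).val < n := by tauto
        omega
  by_cases hc : (g 0).val < n
  · -- path starts in class A : even indices are in A
    have evenA : ∀ m, m < (2*k-1) → Even m → (g m).val < n := by
      intro m hm he
      exact (par m hm).2 (iff_of_true he hc)
    -- internal even vertices are hubs
    have internal : ∀ j, 1 ≤ j → j ≤ k-2 → (g (2*j)).val < k-2 := by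
      intro j hj1 hj2
      by_contra hT
      have hA : (g (2*j)).val < n := evenA _ (by omega) ⟨j, by ring⟩
      have e1 : (myG k n).Adj (g (2*j-1)) (g (2*j)) := by
        have := hadj (2*j-1) (by omega)
        have heq : 2*j-1+1 = 2*j := by omega
        rwa [heq] at this
      have e2 : (myG k n).Adj (g (2*j)) (g (2*j+1)) := hadj (2*j) (by omega)
      have n1 : (g (2*j-1)).val = n := adj_pendant (Nat.le_of_not_lt hT) hA e1.symm
      have n2 : (g (2*j+1)).val = n := adj_pendant (Nat.le_of_not_lt hT) hA e2
      have : g (2*j-1) = g (2*j+1) := Fin.ext (n1.trans n2.symm)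
      have := ginj _ _ (by omega) (by omega) this
      omega
    by_cases h0 : (g 0).val < k-2
    · refine pigeon hk hn (fun j : Fin (k-1) => g (2*j.val)) ?_ ?_
      · intro a b hab
        have := ginj _ _ (by omega) (by omega) hab
        exact Fin.ext (by omega)
      · intro j
        show (g (2*j.val)).val < k-2
        rcases Nat.eq_zero_or_pos j.val with hz | hpos
        · simpa [hz] using h0
        · exact internal j.val hpos (by omega)
    · by_cases h1 : (g (2*k-2)).val < k-2
      · refine pigeon hk hn (fun j : Fin (k-1) => g (2*j.val+2)) ?_ ?_
        · intro a b hab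
          have := ginj _ _ (by omega) (by omega) hab
          exact Fin.ext (by omega)
        · intro j
          show (g (2*j.val+2)).val < k-2
          rcases Nat.lt_or_ge j.val (k-2) with hlt | hge
          · have := internal (j.val+1) (by omega) (by omega)
            have heq : 2*(j.val+1) = 2*j.val+2 := by ring
            rwa [heq] at this
          · have hje : j.val = k-2 := by omega
            have heq : 2*j.val+2 = 2*k-2 := by omega
            rw [heq]; exact h1
      · -- both endpoints pendants: their neighbours both equal b0
        have hA1 : (g (2*k-2)).val < n := evenA _ (by omega) ⟨k-1, by omega⟩
        have n1 : (g 1).val = n := adj_pendant (Nat.le_of_not_lt h0) hc (hadj 0 (by omega))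
        have e2 : (myG k n).Adj (g (2*k-3)) (g (2*k-2)) := by
          have := hadj (2*k-3) (by omega)
          have heq : 2*k-3+1 = 2*k-2 := by omega
          rwa [heq] at this
        have n2 : (g (2*k-3)).val = n := adj_pendant (Nat.le_of_not_lt h1) hA1 e2.symm
        have : g 1 = g (2*k-3) := Fin.ext (n1.trans n2.symm)
        have := ginj _ _ (by omega) (by omega) this
        omega
  · -- path starts in class B : odd indices are in A and all are internal
    have oddA : ∀ m, m < (2*k-1) → ¬ Even m → (g m).val < n := by
      intro m hm he
      exact (par m hm).2 (iff_of_false he hc)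
    refine pigeon hk hn (fun j : Fin (k-1) => g (2*j.val+1)) ?_ ?_
    · intro a b hab
      have := ginj _ _ (by omega) (by omega) hab
      exact Fin.ext (by omega)
    · intro j
      show (g (2*j.val+1)).val < k-2
      by_contra hT
      have hA : (g (2*j.val+1)).val < n := by
        refine oddA _ (by omega) ?_
        simp [Nat.even_add_one, parity_simps]
      have e1 : (myG k n).Adj (g (2*j.val)) (g (2*j.val+1)) := hadj (2*j.val) (by omega)
      have e2 : (myG k n).Adj (g (2*j.val+1)) (g (2*j.val+2)) := by
        have := hadj (2*j.val+1) (by omega)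
        rwa [show 2*j.val+1+1 = 2*j.val+2 from rfl] at this
      have n1 : (g (2*j.val)).val = n := adj_pendant (Nat.le_of_not_lt hT) hA e1.symm
      have n2 : (g (2*j.val+2)).val = n := adj_pendant (Nat.le_of_not_lt hT) hA e2
      have : g (2*j.val) = g (2*j.val+2) := Fin.ext (n1.trans n2.symm)
      have := ginj _ _ (by omega) (by omega) this
      omega

/-- `(A, B)` is a bipartition of the graph `G`: the two classes cover the vertex
set, are disjoint, and every edge has one endpoint in each class. -/
def IsBipartition {V : Type*} (G : SimpleGraph V) (A B : Finset V) : Prop :=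
  (∀ v, v ∈ A ∨ v ∈ B) ∧ (∀ v, ¬(v ∈ A ∧ v ∈ B)) ∧
  ∀ ⦃u v⦄, G.Adj u v → (u ∈ A ∧ v ∈ B) ∨ (u ∈ B ∧ v ∈ A)

/-- For every `k ≥ 3` and every `n ≥ k`, there is a connected bipartite graph with both
classes of size `n`, with no path on `2k-1` vertices (hence also none on `2k` vertices)
as a subgraph, having exactly `(k-1)n - (k-2)` edges. -/
theorem stmt14 (k n : ℕ) (hk : 3 ≤ k) (hn : k ≤ n) :
    ∃ (G : SimpleGraph (Fin (2 * n))) (A B : Finset (Fin (2 * n))),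
      IsBipartition G A B ∧ A.card = n ∧ B.card = n ∧ G.Connected ∧
      ¬ Contains G (pathGraph (2 * k - 1)) ∧ ¬ Contains G (pathGraph (2 * k)) ∧
      G.edgeSet.ncard = (k - 1) * n - (k - 2) := by
  refine ⟨myG k n, Finset.univ.filter (fun v => v.val < n),
    Finset.univ.filter (fun v => n ≤ v.val), ?_, ?_, ?_, ?_, ?_, ?_, ?_⟩
  · refine ⟨?_, ?_, ?_⟩
    · intro v; simp only [Finset.mem_filter, Finset.mem_univ, true_and]; omega
    · intro v hv
      simp only [Finset.mem_filter, Finset.mem_univ, true_and] at hv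
      omega
    · intro u v h
      rcases adj_sides h with ⟨h1, h2⟩ | ⟨h1, h2⟩
      · exact Or.inl ⟨Finset.mem_filter.2 ⟨Finset.mem_univ _, h1⟩,
          Finset.mem_filter.2 ⟨Finset.mem_univ _, h2⟩⟩
      · exact Or.inr ⟨Finset.mem_filter.2 ⟨Finset.mem_univ _, h2⟩,
          Finset.mem_filter.2 ⟨Finset.mem_univ _, h1⟩⟩
  · exact card_filter_lt (by omega)
  · rw [card_filter_ge]; omega
  · -- connectivity
    have hn2 : 0 < 2*n := by omega
    have hnn : n < 2*n := by omega
    let v0 : Fin (2*n) := ⟨0, hn2⟩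
    let b0 : Fin (2*n) := ⟨n, hnn⟩
    have hv0val : v0.val = 0 := rfl
    have hb0val : b0.val = n := rfl
    have hb0 : ∀ v : Fin (2*n), v.val < n → (myG k n).Adj v b0 := by
      intro v hv
      by_cases h : v.val < k-2
      · exact Or.inl (Or.inl ⟨h, hv, by omega⟩)
      · exact Or.inl (Or.inr ⟨Nat.le_of_not_lt h, hv, hb0val⟩)
    have hv0 : ∀ v : Fin (2*n), n ≤ v.val → (myG k n).Adj v0 v := by
      intro v hv
      exact Or.inl (Or.inl ⟨by omega, by omega, hv⟩)
    have hreach : ∀ v, (myG k n).Reachable v0 v := by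
      intro v
      by_cases hv : v.val < n
      · exact ((hv0 b0 (by omega)).reachable).trans
          ((hb0 v hv).symm.reachable)
      · exact (hv0 v (Nat.le_of_not_lt hv)).reachable
    haveI : Nonempty (Fin (2*n)) := ⟨v0⟩
    exact ⟨fun u v => ((hreach u).symm.trans (hreach v))⟩
  · exact no_path hk hn
  · intro h
    exact no_path hk hn (contains_path_mono _ (by omega) h)
  · -- edge count
    have him : (myG k n).edgeSet
        = (fun p : Fin (2*n) × Fin (2*n) => s(p.1, p.2)) ''
          ↑((Finset.univ.filter fun u : Fin (2*n) => u.val < k-2) ×ˢ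
              (Finset.univ.filter fun v : Fin (2*n) => n ≤ v.val) ∪
            (Finset.univ.filter fun u : Fin (2*n) => k-2 ≤ u.val ∧ u.val < n) ×ˢ
              {(⟨n, by omega⟩ : Fin (2*n))}) := by
      ext e
      induction e using Sym2.ind with
      | _ u v =>
        rw [SimpleGraph.mem_edgeSet]
        constructor
        · intro h
          rcases h with h | h
          · refine ⟨(u, v), ?_, rfl⟩
            simp only [Finset.coe_union, Set.mem_union, Finset.coe_product,
              Finset.mem_coe, Finset.mem_product, Finset.mem_filter, Finset.mem_univ,
              true_and, Finset.mem_singleton, Set.mem_prod]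
            rcases h with ⟨h1, h2, h3⟩ | ⟨h1, h2, h3⟩
            · exact Or.inl ⟨h1, h3⟩
            · exact Or.inr ⟨⟨h1, h2⟩, Fin.ext h3⟩
          · refine ⟨(v, u), ?_, Sym2.eq_swap⟩
            simp only [Finset.coe_union, Set.mem_union, Finset.coe_product,
              Finset.mem_coe, Finset.mem_product, Finset.mem_filter, Finset.mem_univ,
              true_and, Finset.mem_singleton, Set.mem_prod]
            rcases h with ⟨h1, h2, h3⟩ | ⟨h1, h2, h3⟩
            · exact Or.inl ⟨h1, h3⟩
            · exact Or.inr ⟨⟨h1, h2⟩, Fin.ext h3⟩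
        · rintro ⟨⟨p1, p2⟩, hp, he⟩
          simp only [Finset.coe_union, Set.mem_union, Finset.coe_product,
            Finset.mem_coe, Finset.mem_product, Finset.mem_filter, Finset.mem_univ,
            true_and, Finset.mem_singleton, Set.mem_prod] at hp
          have hadj : (myG k n).Adj p1 p2 := by
            rcases hp with ⟨h1, h2⟩ | ⟨⟨h1, h2⟩, h3⟩
            · exact Or.inl (Or.inl ⟨h1, by omega, h2⟩)
            · exact Or.inl (Or.inr ⟨h1, h2, by rw [h3]⟩)
          rw [Sym2.eq_iff] at he
          rcases he with ⟨ha, hb⟩ | ⟨ha, hb⟩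
          · rw [← ha, ← hb]; exact hadj
          · rw [← ha, ← hb]; exact hadj.symm
    rw [him]
    rw [Set.ncard_image_of_injOn, Set.ncard_coe_finset]
    · rw [Finset.card_union_of_disjoint, Finset.card_product, Finset.card_product,
        card_filter_lt (show k-2 ≤ 2*n by omega), card_filter_ge,
        card_filter_ico (show n ≤ 2*n by omega), Finset.card_singleton]
      · have h2n : 2*n - n = n := by omega
        rw [h2n]
        have e1 : (k-1)*n = (k-2)*n + n := by
          have : k - 1 = (k-2) + 1 := by omega
          rw [this, Nat.succ_mul]
        rw [e1, Nat.mul_one]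
        have hkn : k - 2 ≤ n := by omega
        omega
      · rw [Finset.disjoint_left]
        rintro ⟨a, b⟩ h1 h2
        simp only [Finset.mem_product, Finset.mem_filter, Finset.mem_univ, true_and,
          Finset.mem_singleton] at h1 h2
        omega
    · rintro ⟨a, b⟩ ha ⟨c, d⟩ hc h
      simp only [Finset.coe_union, Set.mem_union, Finset.coe_product,
        Finset.mem_coe, Finset.mem_product, Finset.mem_filter, Finset.mem_univ,
        true_and, Finset.mem_singleton, Set.mem_prod] at ha hc
      have hab : a.val < n ∧ n ≤ b.val := by
        rcases ha with ⟨h1, h2⟩ | ⟨⟨h1, h2⟩, h3⟩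
        · exact ⟨by omega, h2⟩
        · refine ⟨h2, ?_⟩; rw [h3]
      have hcd : c.val < n ∧ n ≤ d.val := by
        rcases hc with ⟨h1, h2⟩ | ⟨⟨h1, h2⟩, h3⟩
        · exact ⟨by omega, h2⟩
        · refine ⟨h2, ?_⟩; rw [h3]
      simp only [Sym2.eq_iff] at h
      rcases h with ⟨h1, h2⟩ | ⟨h1, h2⟩
      · rw [Prod.mk.injEq]; exact ⟨h1, h2⟩
      · exfalso
        have : a.val < n := hab.1
        have : n ≤ d.val := hcd.2
        rw [h1] at hab
        omega
end

section
/- Let k ≥ 3 and let G be a connected bipartite simple graph with both bipartition classes of size n ≥ k, containing no path on 2k vertices as a subgraph, and let P = u_1 u_2 … u_p be a longest path in G with u_1 and u_p in different bipartition classes. Then the degrees satisfy d(u_1) + d(u_p) ≤ k - 1 and the graph obtained from G by deleting u_1 and u_p is connected. -/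
open SimpleGraph

namespace Stmt16Aux

variable {V : Type*} {G : SimpleGraph V} {A B : Finset V}

lemma bip_swap (h : IsBipartition G A B) : IsBipartition G B A :=
  ⟨fun v => (h.1 v).symm, fun v hv => h.2.1 v ⟨hv.2, hv.1⟩, fun _ _ a => (h.2.2 a).symm⟩

lemma bip_parity (hbip : IsBipartition G A B) {a b : V} (W : G.Walk a b) :
    ∀ i, i ≤ W.length → (W.getVert i ∈ A ↔ (a ∈ A ↔ Even i)) := by
  induction W with
  | nil =>
    intro i hi
    simp only [SimpleGraph.Walk.length_nil, Nat.le_zero] at hi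
    subst hi; simp
  | @cons a b' c h q ih =>
    intro i hi
    cases i with
    | zero => simp
    | succ j =>
      have hj : j ≤ q.length := by
        simpa [SimpleGraph.Walk.length_cons, Nat.succ_le_succ_iff] using hi
      rw [SimpleGraph.Walk.getVert_cons_succ, ih j hj, Nat.even_add_one]
      have hab := hbip.2.2 h
      have hda := hbip.2.1 a
      have hdb := hbip.2.1 b'
      tauto

lemma getVert_getElem? {a b : V} (W : G.Walk a b) :
    ∀ i, i ≤ W.length → W.support[i]? = some (W.getVert i) := by
  induction W with
  | nil => intro i hi; simp only [SimpleGraph.Walk.length_nil, Nat.le_zero] at hi; subst hi; simp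
  | @cons a b' c h q ih =>
    intro i hi
    cases i with
    | zero => simp
    | succ j =>
      have hj : j ≤ q.length := by
        simpa [SimpleGraph.Walk.length_cons, Nat.succ_le_succ_iff] using hi
      rw [SimpleGraph.Walk.getVert_cons_succ, SimpleGraph.Walk.support_cons]
      simpa using ih j hj

lemma getVert_inj {a b : V} {W : G.Walk a b} (hW : W.IsPath) {i j : ℕ}
    (hi : i ≤ W.length) (hj : j ≤ W.length) (hij : W.getVert i = W.getVert j) : i = j := by
  have hnd : W.support.Nodup := hW.support_nodup
  have h1 := getVert_getElem? W i hi
  have h2 := getVert_getElem? W j hj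
  have hlen : W.support.length = W.length + 1 := SimpleGraph.Walk.length_support W
  exact (List.getElem?_inj (i := i) (j := j) (by omega) hnd).mp (by rw [h1, h2, hij])

lemma contains_of_path {m : ℕ} {x y : V} (Q : G.Walk x y) (hQ : Q.IsPath)
    (h : m ≤ Q.length + 1) : Contains G (pathGraph m) := by
  refine ⟨⟨fun i => Q.getVert i, ?_⟩, ?_⟩
  · intro i j hij
    rw [pathGraph_adj] at hij
    have hi : (i : ℕ) ≤ m - 1 := by omega
    have hj : (j : ℕ) ≤ m - 1 := by omega
    rcases hij with hij | hij
    · have hlt : (i : ℕ) < Q.length := by omega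
      have := Q.adj_getVert_succ hlt
      rwa [show (i : ℕ) + 1 = (j : ℕ) from hij] at this
    · have hlt : (j : ℕ) < Q.length := by omega
      have := (Q.adj_getVert_succ hlt).symm
      rwa [show (j : ℕ) + 1 = (i : ℕ) from hij] at this
  · intro i j hij
    have hi : (i : ℕ) ≤ Q.length := by omega
    have hj : (j : ℕ) ≤ Q.length := by omega
    exact Fin.ext (getVert_inj hQ hi hj hij)

lemma length_takeUntil_eq [DecidableEq V] {a b : V} {W : G.Walk a b} (hW : W.IsPath) {y : V}
    {i : ℕ} (hi : i ≤ W.length) (hgv : W.getVert i = y) (hys : y ∈ W.support) :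
    (W.takeUntil y hys).length = i := by
  set t := (W.takeUntil y hys).length with ht
  have h1 : W.getVert t = y := by
    have h2 : ((W.takeUntil y hys).append (W.dropUntil y hys)).getVert t = y := by
      rw [SimpleGraph.Walk.getVert_append]
      simp [ht]
    rwa [W.take_spec hys] at h2
  exact getVert_inj hW (W.length_takeUntil_le hys) hi (h1.trans hgv.symm)

lemma reach_induce {s : Set V} {a b : V} (W : G.Walk a b) (hsub : ∀ x ∈ W.support, x ∈ s) :
    (G.induce s).Reachable ⟨a, hsub a W.start_mem_support⟩ ⟨b, hsub b W.end_mem_support⟩ := by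
  induction W with
  | nil => exact SimpleGraph.Reachable.refl _
  | @cons a b' c h q ih =>
    have hsub' : ∀ x ∈ q.support, x ∈ s := fun x hx =>
      hsub x (by simp [SimpleGraph.Walk.support_cons, hx])
    have ha : a ∈ s := hsub a (SimpleGraph.Walk.start_mem_support _)
    have hadj : (G.induce s).Adj ⟨a, ha⟩ ⟨b', hsub' b' q.start_mem_support⟩ := by
      simp only [SimpleGraph.comap_adj, Function.Embedding.coe_subtype]
      exact h
    exact hadj.reachable.trans (ih hsub')

lemma support_pair {a b : V} (D : G.Walk a b) (hD : D.length = 1) :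
    ∀ z ∈ D.support, z = a ∨ z = b := by
  cases D with
  | nil => simp at hD
  | cons h q =>
    cases q with
    | nil => intro z hz; simpa using hz
    | cons h' q' => simp [SimpleGraph.Walk.length_cons] at hD

lemma walk_cons_decomp {a b : V} (p : G.Walk a b) (h : p.length ≠ 0) :
    ∃ (c : V) (hab : G.Adj a c) (q : G.Walk c b), p = SimpleGraph.Walk.cons hab q := by
  cases p with
  | nil => simp at h
  | cons hab q => exact ⟨_, hab, q, rfl⟩

lemma reach_lemma {s : Set V} {u v w2 : V} (hw2s : w2 ∈ s)
    (hmem : ∀ {t : V}, t ≠ u → t ≠ v → t ∈ s)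
    (hkeyu : ∀ t, G.Adj u t → ∀ (ht : t ∈ s), (G.induce s).Reachable ⟨t, ht⟩ ⟨w2, hw2s⟩)
    (hkeyv : ∀ t, G.Adj v t → ∀ (ht : t ∈ s), (G.induce s).Reachable ⟨t, ht⟩ ⟨w2, hw2s⟩) :
    ∀ (z : V) (W : G.Walk z w2) (hzu : z ≠ u) (hzv : z ≠ v),
      (G.induce s).Reachable ⟨z, hmem hzu hzv⟩ ⟨w2, hw2s⟩ := by
  intro z W
  induction W with
  | nil => intro _ _; exact SimpleGraph.Reachable.refl _
  | @cons za bb cc h W ih =>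
    intro hzu hzv
    by_cases hbu : bb = u
    · exact hkeyu za (hbu ▸ h).symm _
    · by_cases hbv : bb = v
      · exact hkeyv za (hbv ▸ h).symm _
      · have hadj : (G.induce s).Adj ⟨za, hmem hzu hzv⟩ ⟨bb, hmem hbu hbv⟩ := by
          simp only [SimpleGraph.comap_adj, Function.Embedding.coe_subtype]
          exact h
        exact hadj.reachable.trans (ih hw2s hkeyu hkeyv hbu hbv)

lemma no_crossing [DecidableEq V] [Fintype V] {u v : V} {P : G.Walk u v} (hP : P.IsPath)
    (hconn : G.Connected)
    (hmax : ∀ (x y : V) (Q : G.Walk x y), Q.IsPath → Q.length ≤ P.length)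
    (hcard : P.length + 1 < Fintype.card V)
    {i : ℕ} (hi : i + 1 ≤ P.length)
    (hvx : G.Adj v (P.getVert i)) (huy : G.Adj u (P.getVert (i + 1))) : False := by
  set L := P.length with hL
  have hy : P.getVert (i+1) ∈ P.support :=
    SimpleGraph.Walk.mem_support_iff_exists_getVert.mpr ⟨i+1, rfl, hi⟩
  set y := P.getVert (i+1) with hydef
  set A1 := P.takeUntil y hy with hA1def
  set A2 := P.dropUntil y hy with hA2def
  have hA1 : A1.IsPath := hP.takeUntil hy
  have hA2 : A2.IsPath := hP.dropUntil hy
  have hA1len : A1.length = i + 1 := length_takeUntil_eq hP hi rfl hy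
  have hsum : A1.length + A2.length = L := by
    have := congrArg SimpleGraph.Walk.length (P.take_spec hy)
    rwa [SimpleGraph.Walk.length_append] at this
  have hxA1 : A1.getVert i = P.getVert i := by
    have h2 : (A1.append A2).getVert i = A1.getVert i := by
      rw [SimpleGraph.Walk.getVert_append]
      simp [hA1len]
    rw [P.take_spec hy] at h2
    exact h2.symm
  set x := P.getVert i with hxdef
  have hx : x ∈ A1.support :=
    SimpleGraph.Walk.mem_support_iff_exists_getVert.mpr ⟨i, hxA1, by omega⟩
  set Bw := A1.takeUntil x hx with hBdef
  set D := A1.dropUntil x hx with hDdef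
  have hBlen : Bw.length = i := length_takeUntil_eq hA1 (by omega) hxA1 hx
  have hBpath : Bw.IsPath := hA1.takeUntil hx
  have hBsum : Bw.length + D.length = A1.length := by
    have := congrArg SimpleGraph.Walk.length (A1.take_spec hx)
    rwa [SimpleGraph.Walk.length_append] at this
  have hDlen : D.length = 1 := by omega
  have hDmem : ∀ z ∈ D.support, z = x ∨ z = y := support_pair D hDlen
  set c0 : G.Walk u u := Bw.append (SimpleGraph.Walk.cons hvx.symm (A2.reverse.concat huy.symm))
    with hc0def
  have hc0len : c0.length = L + 1 := by
    rw [hc0def, SimpleGraph.Walk.length_append, SimpleGraph.Walk.length_cons,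
      SimpleGraph.Walk.length_concat, SimpleGraph.Walk.length_reverse]
    omega
  have hc0sup : c0.support = Bw.support ++ (A2.support.reverse ++ [u]) := by
    rw [hc0def, SimpleGraph.Walk.support_append, SimpleGraph.Walk.support_cons,
      SimpleGraph.Walk.support_concat, SimpleGraph.Walk.support_reverse]
    simp
  have hPs : P.support = A1.support ++ A2.support.tail := by
    conv_lhs => rw [← P.take_spec hy]
    rw [SimpleGraph.Walk.support_append]
  have hA1s : A1.support = Bw.support ++ D.support.tail := by
    conv_lhs => rw [← A1.take_spec hx]
    rw [SimpleGraph.Walk.support_append]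
  have hyA2 : y ∈ A2.support := A2.start_mem_support
  have hxBw : x ∈ Bw.support := Bw.end_mem_support
  have hPc0 : ∀ z ∈ P.support, z ∈ c0.support := by
    intro z hz
    rw [hPs, List.mem_append] at hz
    rw [hc0sup]
    rcases hz with hz | hz
    · rw [hA1s, List.mem_append] at hz
      rcases hz with hz | hz
      · exact List.mem_append_left _ hz
      · rcases hDmem z (List.mem_of_mem_tail hz) with rfl | rfl
        · exact List.mem_append_left _ hxBw
        · exact List.mem_append_right _ (List.mem_append_left _ (List.mem_reverse.mpr hyA2))
    · exact List.mem_append_right _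
        (List.mem_append_left _ (List.mem_reverse.mpr (List.mem_of_mem_tail hz)))
  obtain ⟨w, hw⟩ : ∃ w, w ∉ P.support := by
    by_contra hcon
    push_neg at hcon
    have h1 : (Finset.univ : Finset V).card ≤ P.support.toFinset.card :=
      Finset.card_le_card (fun z _ => List.mem_toFinset.mpr (hcon z))
    have h2 := P.support.toFinset_card_le
    rw [SimpleGraph.Walk.length_support] at h2
    rw [Finset.card_univ] at h1
    omega
  obtain ⟨Wwu⟩ := hconn.preconnected w u
  obtain ⟨d, _, hdfst, hdsnd⟩ := Wwu.exists_boundary_dart {z | z ∉ P.support} hw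
    (by simp [P.start_mem_support])
  have hdsnd' : d.snd ∈ P.support := not_not.mp hdsnd
  have hadj : G.Adj d.fst d.snd := d.adj
  have hzc0 : d.snd ∈ c0.support := hPc0 _ hdsnd'
  set c1 := c0.rotate _ hzc0 with hc1def
  have hc1len : c1.length = L + 1 := by
    rw [hc1def, SimpleGraph.Walk.rotate, SimpleGraph.Walk.length_append]
    have := congrArg SimpleGraph.Walk.length (c0.take_spec hzc0)
    rw [SimpleGraph.Walk.length_append] at this
    omega
  have hnodP : P.support.Nodup := hP.support_nodup
  have hPnd := hPs ▸ hnodP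
  rw [List.nodup_append] at hPnd
  obtain ⟨hA1nd, hA2tnd, hdisj12⟩ := hPnd
  have hA1nd' := hA1s ▸ hA1nd
  rw [List.nodup_append] at hA1nd'
  obtain ⟨hBnd, hDtnd, hdisjBD⟩ := hA1nd'
  have hxy : x ≠ y := by
    intro h
    have := getVert_inj hP (by omega) hi h
    omega
  have hyDt : y ∈ D.support.tail := by
    have h1 : y ∈ D.support := D.end_mem_support
    rw [D.support_eq_cons] at h1
    rcases List.mem_cons.mp h1 with h1 | h1
    · exact absurd h1 hxy.symm
    · assumption
  have hyBw : y ∉ Bw.support := fun h => hdisjBD y h y hyDt rfl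
  have hA2c : A2.support = y :: A2.support.tail := A2.support_eq_cons
  have hBA2 : ∀ z ∈ Bw.support, z ∉ A2.support := by
    intro z hzB hzA2
    rw [hA2c] at hzA2
    rcases List.mem_cons.mp hzA2 with h1 | h1
    · exact hyBw (h1 ▸ hzB)
    · exact hdisj12 z (hA1s ▸ List.mem_append_left _ hzB) z h1 rfl
  have huy' : u ≠ y := by
    intro h
    have h0 : P.getVert 0 = P.getVert (i+1) := (P.getVert_zero).trans (h.trans hydef)
    have := getVert_inj hP (by omega) hi h0
    omega
  have huA2 : u ∉ A2.support := by
    intro h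
    rw [hA2c] at h
    rcases List.mem_cons.mp h with h1 | h1
    · exact huy' h1
    · exact hdisj12 u (A1.start_mem_support) u h1 rfl
  have hBc : Bw.support = u :: Bw.support.tail := Bw.support_eq_cons
  have huBwt : u ∉ Bw.support.tail := by
    have := hBnd
    rw [hBc, List.nodup_cons] at this
    exact this.1
  have hc0tail : c0.support.tail = Bw.support.tail ++ (A2.support.reverse ++ [u]) := by
    rw [hc0sup]
    conv_lhs => rw [hBc]
    simp
  have hnod : c0.support.tail.Nodup := by
    rw [hc0tail, List.nodup_append]
    refine ⟨by rw [hBc, List.nodup_cons] at hBnd; exact hBnd.2, ?_, ?_⟩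
    · rw [List.nodup_append]
      refine ⟨List.nodup_reverse.mpr (hA2.support_nodup), List.nodup_singleton u, ?_⟩
      intro t ht t' ht' htt
      subst htt
      rw [List.mem_singleton] at ht'
      subst ht'
      exact huA2 (List.mem_reverse.mp ht)
    · intro t ht t' ht' htt
      subst htt
      have htB : t ∈ Bw.support := List.mem_of_mem_tail ht
      rw [List.mem_append] at ht'
      rcases ht' with ht' | ht'
      · exact hBA2 t htB (List.mem_reverse.mp ht')
      · rw [List.mem_singleton] at ht'
        subst ht'
        exact huBwt ht
  have hc1tailnd : c1.support.tail.Nodup :=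
    ((SimpleGraph.Walk.support_rotate c0 _ hzc0).nodup_iff).mpr hnod
  have hc1nz : c1.length ≠ 0 := by omega
  obtain ⟨b, hzb, q, hq⟩ : ∃ (b : V) (hab : G.Adj d.snd b) (q : G.Walk b d.snd),
      c1 = SimpleGraph.Walk.cons hab q := by
    cases hcc : c1 with
    | nil => rw [hcc] at hc1nz; simp at hc1nz
    | cons hab q => exact ⟨_, hab, q, rfl⟩
  have hqsupp : q.support = c1.support.tail := by rw [hq, SimpleGraph.Walk.support_cons]; rfl
  have hqpath : q.IsPath := by
    rw [SimpleGraph.Walk.isPath_def, hqsupp]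
    exact hc1tailnd
  have hqlen : q.length = L := by
    have : c1.length = q.length + 1 := by rw [hq, SimpleGraph.Walk.length_cons]
    omega
  have hc0P : ∀ t ∈ c0.support, t ∈ P.support := by
    intro t ht
    rw [hc0sup] at ht
    rcases List.mem_append.mp ht with ht | ht
    · exact (P.support_takeUntil_subset hy) ((A1.support_takeUntil_subset hx) ht)
    · rcases List.mem_append.mp ht with ht | ht
      · exact (P.support_dropUntil_subset hy) (List.mem_reverse.mp ht)
      · rw [List.mem_singleton] at ht
        subst ht
        exact P.start_mem_support
  have hqP : ∀ t ∈ q.support, t ∈ P.support := by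
    intro t ht
    rw [hqsupp] at ht
    have := ((SimpleGraph.Walk.support_rotate c0 _ hzc0).perm).mem_iff.mp ht
    exact hc0P t (List.mem_of_mem_tail this)
  have haq : d.fst ∉ q.support := fun h => hdfst (hqP _ h)
  set Q := SimpleGraph.Walk.cons hadj q.reverse with hQdef
  have hQpath : Q.IsPath := by
    rw [hQdef, SimpleGraph.Walk.cons_isPath_iff]
    exact ⟨hqpath.reverse, by rw [SimpleGraph.Walk.support_reverse, List.mem_reverse]; exact haq⟩
  have := hmax _ _ Q hQpath
  rw [hQdef, SimpleGraph.Walk.length_cons, SimpleGraph.Walk.length_reverse] at this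
  omega

lemma main_aux {V : Type*} [Fintype V] (G : SimpleGraph V) (A B : Finset V) (k n : ℕ)
    (hk : 3 ≤ k) (hn : k ≤ n) (hbip : IsBipartition G A B)
    (hA : A.card = n) (hB : B.card = n)
    (hconn : G.Connected) (hfree : ¬ Contains G (pathGraph (2 * k)))
    (u v : V) (P : G.Walk u v) (hP : P.IsPath)
    (hmax : ∀ (x y : V) (Q : G.Walk x y), Q.IsPath → Q.length ≤ P.length)
    (hu : u ∈ A) (hv : v ∈ B) :
    (G.neighborSet u).ncard + (G.neighborSet v).ncard ≤ k - 1 ∧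
      (G.induce ({u, v}ᶜ : Set V)).Connected := by
  classical
  set L := P.length with hL
  have hunion : A ∪ B = Finset.univ := by
    apply Finset.eq_univ_of_forall
    intro z; rcases hbip.1 z with h | h
    · exact Finset.mem_union_left _ h
    · exact Finset.mem_union_right _ h
  have hdisjAB : Disjoint A B := by
    rw [Finset.disjoint_left]
    intro a ha hb
    exact hbip.2.1 a ⟨ha, hb⟩
  have hcardV : Fintype.card V = 2 * n := by
    rw [← Finset.card_univ, ← hunion, Finset.card_union_of_disjoint hdisjAB, hA, hB]
    omega
  have hvA : v ∉ A := fun h => hbip.2.1 v ⟨h, hv⟩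
  have hodd : ¬ Even L := by
    have := bip_parity hbip P L le_rfl
    rw [SimpleGraph.Walk.getVert_length] at this
    tauto
  have hoddL : L % 2 = 1 := Nat.not_even_iff.mp hodd
  have hlen2k : L + 1 < 2 * k := by
    by_contra hcon
    exact hfree (contains_of_path P hP (by omega))
  have hcardP : L + 1 < Fintype.card V := by omega
  have hcross : ∀ i, i + 1 ≤ L → G.Adj v (P.getVert i) → G.Adj u (P.getVert (i+1)) → False :=
    fun i h1 hvx huy => no_crossing hP hconn hmax hcardP h1 hvx huy
  have hNu : ∀ w, G.Adj u w → w ∈ P.support := by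
    intro w hw
    by_contra hws
    have hQ : (SimpleGraph.Walk.cons hw.symm P).IsPath :=
      (SimpleGraph.Walk.cons_isPath_iff _ _).mpr ⟨hP, hws⟩
    have := hmax _ _ _ hQ
    rw [SimpleGraph.Walk.length_cons] at this
    omega
  have hNv : ∀ w, G.Adj v w → w ∈ P.support := by
    intro w hw
    by_contra hws
    have hQ : (SimpleGraph.Walk.cons hw.symm P.reverse).IsPath :=
      (SimpleGraph.Walk.cons_isPath_iff _ _).mpr
        ⟨hP.reverse, by rwa [SimpleGraph.Walk.support_reverse, List.mem_reverse]⟩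
    have := hmax _ _ _ hQ
    rw [SimpleGraph.Walk.length_cons, SimpleGraph.Walk.length_reverse] at this
    omega
  have hpar : ∀ i, i ≤ L → (P.getVert i ∈ A ↔ Even i) := by
    intro i hi
    rw [bip_parity hbip P i hi]
    tauto
  set Su := (Finset.range (L+1)).filter (fun i => G.Adj u (P.getVert i)) with hSudef
  set Sv := (Finset.range (L+1)).filter (fun i => G.Adj v (P.getVert i)) with hSvdef
  have hNcard : ∀ (z : V), (∀ w, G.Adj z w → w ∈ P.support) →
      (G.neighborSet z).ncard
        = ((Finset.range (L+1)).filter (fun i => G.Adj z (P.getVert i))).card := by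
    intro z hz
    have hset : G.neighborSet z =
        ↑(((Finset.range (L+1)).filter (fun i => G.Adj z (P.getVert i))).image
          (fun i => P.getVert i)) := by
      ext w
      simp only [SimpleGraph.mem_neighborSet, Finset.coe_image, Set.mem_image,
        Finset.mem_coe, Finset.mem_filter, Finset.mem_range]
      constructor
      · intro hw
        obtain ⟨i, hgi, hile⟩ := SimpleGraph.Walk.mem_support_iff_exists_getVert.mp (hz w hw)
        exact ⟨i, ⟨by omega, by rwa [hgi]⟩, hgi⟩
      · rintro ⟨i, ⟨_, hadj⟩, rfl⟩
        exact hadj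
    rw [hset, Set.ncard_coe_finset]
    apply Finset.card_image_of_injOn
    intro i hi j hj hij
    simp only [Finset.mem_coe, Finset.mem_filter, Finset.mem_range] at hi hj
    exact getVert_inj hP (by omega) (by omega) hij
  have hcu : (G.neighborSet u).ncard = Su.card := hNcard u hNu
  have hcv : (G.neighborSet v).ncard = Sv.card := hNcard v hNv
  have hSuOdd : ∀ i ∈ Su, i % 2 = 1 ∧ i ≤ L := by
    intro i hi
    rw [hSudef, Finset.mem_filter, Finset.mem_range] at hi
    obtain ⟨hir, hadj⟩ := hi
    have hgB : P.getVert i ∉ A := by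
      rcases hbip.2.2 hadj with ⟨_, h2⟩ | ⟨h1, _⟩
      · exact fun h => hbip.2.1 _ ⟨h, h2⟩
      · exact absurd ⟨hu, h1⟩ (hbip.2.1 u)
    have hpi := hpar i (by omega)
    have hne : ¬ Even i := fun he => hgB (hpi.mpr he)
    exact ⟨Nat.not_even_iff.mp hne, by omega⟩
  have hSvEven : ∀ i ∈ Sv, i % 2 = 0 ∧ i ≤ L ∧ G.Adj v (P.getVert i) := by
    intro i hi
    rw [hSvdef, Finset.mem_filter, Finset.mem_range] at hi
    obtain ⟨hir, hadj⟩ := hi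
    have hgA : P.getVert i ∈ A := by
      rcases hbip.2.2 hadj with ⟨h1, _⟩ | ⟨_, h2⟩
      · exact (hbip.2.1 v ⟨h1, hv⟩).elim
      · exact h2
    have hpi := hpar i (by omega)
    exact ⟨Nat.even_iff.mp (hpi.mp hgA), by omega, hadj⟩
  set Su' := Su.image (fun i => i - 1) with hSu'def
  have hSu'card : Su'.card = Su.card := by
    apply Finset.card_image_of_injOn
    intro i hi j hj hij
    have hij' : i - 1 = j - 1 := hij
    have h1 := hSuOdd i hi
    have h2 := hSuOdd j hj
    omega
  have hSu'mem : ∀ i ∈ Su', i % 2 = 0 ∧ i + 1 ≤ L ∧ G.Adj u (P.getVert (i+1)) := by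
    intro i hi
    rw [hSu'def, Finset.mem_image] at hi
    obtain ⟨j, hj, rfl⟩ := hi
    have h1 := hSuOdd j hj
    rw [hSudef, Finset.mem_filter] at hj
    have hj1 : j - 1 + 1 = j := by omega
    refine ⟨by omega, by omega, ?_⟩
    rw [hj1]
    exact hj.2
  have hdisj' : Disjoint Su' Sv := by
    rw [Finset.disjoint_left]
    intro i hi hi'
    obtain ⟨he, hle, hadj⟩ := hSu'mem i hi
    obtain ⟨_, _, hadj'⟩ := hSvEven i hi'
    exact hcross i hle hadj' hadj
  have hcardU : Su.card + Sv.card = (Su' ∪ Sv).card := by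
    rw [Finset.card_union_of_disjoint hdisj', hSu'card]
  have hbound : (Su' ∪ Sv).card ≤ k - 1 := by
    have hcle : (Su' ∪ Sv).card ≤ (Finset.range (k-1)).card := by
      apply Finset.card_le_card_of_injOn (fun i => i / 2)
      · intro i hi
        rw [Finset.mem_coe, Finset.mem_union] at hi
        simp only [Finset.mem_coe, Finset.mem_range]
        rcases hi with hi | hi
        · obtain ⟨he, hle, _⟩ := hSu'mem i hi
          omega
        · obtain ⟨he, hle, _⟩ := hSvEven i hi
          omega
      · intro i hi j hj hij
        have hij' : i / 2 = j / 2 := hij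
        have hi' : i % 2 = 0 := by
          rcases Finset.mem_union.mp hi with h | h
          exacts [(hSu'mem i h).1, (hSvEven i h).1]
        have hj' : j % 2 = 0 := by
          rcases Finset.mem_union.mp hj with h | h
          exacts [(hSu'mem j h).1, (hSvEven j h).1]
        omega
    simpa using hcle
  have hL3 : 3 ≤ L := by
    rcases Nat.lt_or_ge L 3 with hc | hc
    · exfalso
      have hL1 : L = 1 := by omega
      obtain ⟨w, hw⟩ : ∃ w, w ∉ P.support := by
        by_contra hcon
        push_neg at hcon
        have h1 : (Finset.univ : Finset V).card ≤ P.support.toFinset.card :=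
          Finset.card_le_card (fun z _ => List.mem_toFinset.mpr (hcon z))
        have h2 := P.support.toFinset_card_le
        rw [SimpleGraph.Walk.length_support] at h2
        rw [Finset.card_univ] at h1
        omega
      obtain ⟨Wwu⟩ := hconn.preconnected w u
      obtain ⟨d, _, hdfst, hdsnd⟩ := Wwu.exists_boundary_dart {z | z ∉ P.support} hw
        (by simp [P.start_mem_support])
      have hdsnd' : d.snd ∈ P.support := not_not.mp hdsnd
      have hdfst' : d.fst ∉ P.support := hdfst
      rcases support_pair P hL1 _ hdsnd' with h | h
      · have hQ : (SimpleGraph.Walk.cons (h ▸ d.adj) P).IsPath :=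
          (SimpleGraph.Walk.cons_isPath_iff _ _).mpr ⟨hP, hdfst'⟩
        have := hmax _ _ _ hQ
        rw [SimpleGraph.Walk.length_cons] at this
        omega
      · have hQ : (SimpleGraph.Walk.cons (h ▸ d.adj) P.reverse).IsPath :=
          (SimpleGraph.Walk.cons_isPath_iff _ _).mpr
            ⟨hP.reverse, by rwa [SimpleGraph.Walk.support_reverse, List.mem_reverse]⟩
        have := hmax _ _ _ hQ
        rw [SimpleGraph.Walk.length_cons, SimpleGraph.Walk.length_reverse] at this
        omega
    · exact hc
  obtain ⟨w2, h1, Q0, hPeq⟩ := walk_cons_decomp P (by omega)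
  have hQ0len : Q0.length = L - 1 := by
    have := congrArg SimpleGraph.Walk.length hPeq
    rw [SimpleGraph.Walk.length_cons] at this
    omega
  obtain ⟨c, h2, R0, hR0⟩ := walk_cons_decomp Q0.reverse
    (by rw [SimpleGraph.Walk.length_reverse]; omega)
  have hPsupp_cons : P.support = u :: Q0.support := by
    rw [hPeq, SimpleGraph.Walk.support_cons]
  have hQR : ∀ t, t ∈ Q0.support ↔ (t = v ∨ t ∈ R0.support) := by
    intro t
    rw [← List.mem_reverse, ← SimpleGraph.Walk.support_reverse, hR0,
      SimpleGraph.Walk.support_cons, List.mem_cons]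
  have hndP := hP.support_nodup
  rw [hPsupp_cons, List.nodup_cons] at hndP
  obtain ⟨huQ0, hQ0nd⟩ := hndP
  have hvR : v ∉ R0.support := by
    have hrev : Q0.reverse.support.Nodup := by
      rw [SimpleGraph.Walk.support_reverse]
      exact List.nodup_reverse.mpr hQ0nd
    rw [hR0, SimpleGraph.Walk.support_cons, List.nodup_cons] at hrev
    exact hrev.1
  have huR : u ∉ R0.support := fun h => huQ0 ((hQR u).mpr (Or.inr h))
  have hmemR : ∀ t ∈ P.support, t ≠ u → t ≠ v → t ∈ R0.support := by
    intro t ht htu htv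
    rw [hPsupp_cons, List.mem_cons] at ht
    rcases ht with rfl | ht
    · exact absurd rfl htu
    · rcases (hQR t).mp ht with rfl | ht
      · exact absurd rfl htv
      · exact ht
  have hmem_s : ∀ {t : V}, t ≠ u → t ≠ v → t ∈ ({u, v}ᶜ : Set V) := by
    intro t ht1 ht2
    simp [ht1, ht2]
  have hRs : ∀ t ∈ R0.support, t ∈ ({u, v}ᶜ : Set V) := fun t ht =>
    hmem_s (fun h => huR (h ▸ ht)) (fun h => hvR (h ▸ ht))
  have hw2R : w2 ∈ R0.support := R0.end_mem_support
  have hw2s : w2 ∈ ({u, v}ᶜ : Set V) := hRs _ hw2R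
  have key : ∀ t (ht : t ∈ R0.support),
      (G.induce ({u, v}ᶜ : Set V)).Reachable ⟨t, hRs t ht⟩ ⟨w2, hw2s⟩ := by
    intro t ht
    have hsub : ∀ x ∈ (R0.dropUntil t ht).support, x ∈ ({u, v}ᶜ : Set V) :=
      fun x hx => hRs x (R0.support_dropUntil_subset ht hx)
    exact reach_induce (R0.dropUntil t ht) hsub
  have hgv1 : P.getVert 1 = w2 := by
    rw [hPeq, SimpleGraph.Walk.getVert_cons_succ]
    exact Q0.getVert_zero
  have hnadjuv : ¬ G.Adj u v := by
    intro h
    exact hcross 0 (by omega) (by rw [P.getVert_zero]; exact h.symm)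
      (by rw [hgv1]; exact h1)
  have hNu' : ∀ t, G.Adj u t → t ∈ R0.support := by
    intro t h
    exact hmemR t (hNu t h) (fun he => G.irrefl (he ▸ h)) (fun he => hnadjuv (he ▸ h))
  have hNv' : ∀ t, G.Adj v t → t ∈ R0.support := by
    intro t h
    exact hmemR t (hNv t h) (fun he => hnadjuv (he ▸ h).symm) (fun he => G.irrefl (he ▸ h))
  have hkeyu : ∀ t, G.Adj u t → ∀ (ht : t ∈ ({u, v}ᶜ : Set V)),
      (G.induce ({u, v}ᶜ : Set V)).Reachable ⟨t, ht⟩ ⟨w2, hw2s⟩ :=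
    fun t hadj _ => key t (hNu' t hadj)
  have hkeyv : ∀ t, G.Adj v t → ∀ (ht : t ∈ ({u, v}ᶜ : Set V)),
      (G.induce ({u, v}ᶜ : Set V)).Reachable ⟨t, ht⟩ ⟨w2, hw2s⟩ :=
    fun t hadj _ => key t (hNv' t hadj)
  have hreach := reach_lemma hw2s (fun {t} => hmem_s) hkeyu hkeyv
  constructor
  · rw [hcu, hcv]
    omega
  · rw [SimpleGraph.connected_iff]
    refine ⟨?_, ⟨⟨w2, hw2s⟩⟩⟩
    rintro ⟨a, ha⟩ ⟨b, hb⟩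
    obtain ⟨hau, hav⟩ : a ≠ u ∧ a ≠ v := by simpa [not_or] using ha
    obtain ⟨hbu, hbv⟩ : b ≠ u ∧ b ≠ v := by simpa [not_or] using hb
    obtain ⟨Wa⟩ := hconn.preconnected a w2
    obtain ⟨Wb⟩ := hconn.preconnected b w2
    exact (hreach a Wa hau hav).trans (hreach b Wb hbu hbv).symm

end Stmt16Aux

/-- Let `k ≥ 3` and let `G` be a connected bipartite graph with both classes of size
`n ≥ k`, with no path on `2k` vertices as a subgraph, and let `P` be a longest path in
`G`, from `u` to `v`, whose two endpoints lie in different bipartition classes. Then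
`d(u) + d(v) ≤ k - 1` and deleting `u` and `v` keeps `G` connected. -/
theorem stmt16 {V : Type*} [Fintype V] (G : SimpleGraph V) (A B : Finset V) (k n : ℕ)
    (hk : 3 ≤ k) (hn : k ≤ n) (hbip : IsBipartition G A B)
    (hA : A.card = n) (hB : B.card = n)
    (hconn : G.Connected) (hfree : ¬ Contains G (pathGraph (2 * k)))
    (u v : V) (P : G.Walk u v) (hP : P.IsPath)
    (hmax : ∀ (x y : V) (Q : G.Walk x y), Q.IsPath → Q.length ≤ P.length)
    (hends : (u ∈ A ∧ v ∈ B) ∨ (u ∈ B ∧ v ∈ A)) :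
    (G.neighborSet u).ncard + (G.neighborSet v).ncard ≤ k - 1 ∧
      (G.induce ({u, v}ᶜ : Set V)).Connected := by
  rcases hends with ⟨hu, hv⟩ | ⟨hu, hv⟩
  · exact Stmt16Aux.main_aux G A B k n hk hn hbip hA hB hconn hfree u v P hP hmax hu hv
  · exact Stmt16Aux.main_aux G B A k n hk hn (Stmt16Aux.bip_swap hbip) hB hA hconn hfree
      u v P hP hmax hu hv
end
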